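/- arXiv:2104.13131 — 2 statements merged into one kernel-verified Lean document; each statement's English description precedes it below -/
import Mathlib

section
/- For terminating impartial games G and H, the Grundy number of the ordinal sum G : H equals the Γ₀(H)-th excluded ordinal of the Grundy set of G, i.e. Γ₀(G : H) = ex_{Γ₀(H)}(Γ₁(G)). -/
universe u

/-- Combinatorial game theory (`SetTheory.PGame`, `Nimber`, `grundyValue`, `Impartial`) is no
longer part of Mathlib; the old definitions are reproduced here with their old meaning. -/
def Nimber : Type (u + 1) :=
  Ordinal.{u}

namespace Nimber

noncomputable instance : ConditionallyCompleteLinearOrderBot Nimber :=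
  inferInstanceAs (ConditionallyCompleteLinearOrderBot Ordinal)

instance : WellFoundedRelation Nimber :=
  inferInstanceAs (WellFoundedRelation Ordinal)

end Nimber

namespace SetTheory

inductive PGame : Type (u + 1)
  | mk : ∀ α β : Type u, (α → PGame) → (β → PGame) → PGame

namespace PGame

def LeftMoves : PGame.{u} → Type u
  | mk l _ _ _ => l

def RightMoves : PGame.{u} → Type u
  | mk _ r _ _ => r

def moveLeft : ∀ g : PGame.{u}, LeftMoves g → PGame.{u}
  | mk _ _ L _ => L

def moveRight : ∀ g : PGame.{u}, RightMoves g → PGame.{u}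
  | mk _ _ _ R => R

def IsOpt (x y : PGame.{u}) : Prop :=
  (∃ i, x = y.moveLeft i) ∨ ∃ j, x = y.moveRight j

theorem isOpt_wf : WellFounded IsOpt.{u} := by
  refine ⟨fun x => ?_⟩
  induction x with
  | mk l r L R ihL ihR =>
    refine Acc.intro _ ?_
    rintro y (⟨i, rfl⟩ | ⟨j, rfl⟩)
    · exact ihL i
    · exact ihR j

instance : WellFoundedRelation PGame.{u} :=
  ⟨IsOpt, isOpt_wf⟩

/-- The pair `(x ≤ y, x ⧏ y)`. -/
def leLF : PGame.{u} → PGame.{u} → Prop × Prop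
  | mk xl xr xL xR, mk yl yr yL yR =>
    ((∀ i, (leLF (xL i) (mk yl yr yL yR)).2) ∧ ∀ j, (leLF (mk xl xr xL xR) (yR j)).2,
     (∃ i, (leLF (mk xl xr xL xR) (yL i)).1) ∨ ∃ j, (leLF (xR j) (mk yl yr yL yR)).1)
termination_by x y => (x, y)
decreasing_by
  all_goals first
    | exact Prod.Lex.left _ _ (Or.inl ⟨_, rfl⟩)
    | exact Prod.Lex.left _ _ (Or.inr ⟨_, rfl⟩)
    | exact Prod.Lex.right _ (Or.inl ⟨_, rfl⟩)
    | exact Prod.Lex.right _ (Or.inr ⟨_, rfl⟩)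

instance : LE PGame.{u} :=
  ⟨fun x y => (leLF x y).1⟩

def PEquiv (x y : PGame.{u}) : Prop :=
  x ≤ y ∧ y ≤ x

def neg : PGame.{u} → PGame.{u}
  | mk l r L R => mk r l (fun i => neg (R i)) fun i => neg (L i)

instance : Neg PGame.{u} :=
  ⟨neg⟩

def ImpartialAux : PGame.{u} → Prop
  | mk l r L R => PEquiv (mk l r L R) (-(mk l r L R)) ∧ (∀ i, ImpartialAux (L i)) ∧
      ∀ j, ImpartialAux (R j)

class Impartial (G : PGame.{u}) : Prop where
  out : ImpartialAux G

noncomputable def grundyValue : PGame.{u} → Nimber.{u}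
  | mk _ _ L _ => sInf (Set.range fun i => grundyValue (L i))ᶜ

end PGame

end SetTheory

open SetTheory PGame Nimber

/-- The ordinal sum `G : H` of games: its options are `G : H'` for options `H'` of `H`,
and `G'` for options `G'` of `G` (discarding `H`). -/
def osum (G : PGame) : PGame → PGame
  | PGame.mk l r L R =>
    PGame.mk (G.LeftMoves ⊕ l) (G.RightMoves ⊕ r)
      (Sum.elim G.moveLeft fun j => osum G (L j))
      (Sum.elim G.moveRight fun j => osum G (R j))

/-- The Grundy set `Γ₁(G)`: the set of Grundy numbers of the options of `G`. -/
def grundySet (G : PGame) : Set Nimber :=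
  Set.range fun i => grundyValue (G.moveLeft i)

/-- The ρ-th excluded ordinal of a set `Λ`:
`ex_ρ(Λ) = mex (Λ ∪ { ex_μ(Λ) | μ < ρ })`, where `mex` is the minimal excludant
(least element of the complement). -/
noncomputable def exc (Λ : Set Nimber) : Nimber → Nimber := fun ρ =>
  sInf {a | a ∉ Λ ∧ ∀ μ < ρ, exc Λ μ ≠ a}
termination_by ρ => ρ

/-! Both sides are minimal excludants: the options of `G : H` have Grundy values `Γ₁(G)` together
with the values of `G : H'`, which by induction on `H` are `ex_{Γ₀(H')}(Γ₁(G))`. Since `ex_•(Λ)`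
is the strictly increasing enumeration of the complement of `Λ`, `mex (Λ ∪ ex_•(Λ) '' S)` is
`ex_{mex S}(Λ)`. -/

universe v

instance Nimber.instWellFoundedLT : WellFoundedLT Nimber.{u} :=
  inferInstanceAs (WellFoundedLT Ordinal.{u})

instance Nimber.small_Iio (o : Nimber.{u}) : Small.{u} (Set.Iio o) :=
  Ordinal.small_Iio o

theorem Nimber.nonempty_compl_of_small (s : Set Nimber.{u}) [Small.{u} s] : sᶜ.Nonempty :=
  nonempty_of_not_bddAbove (@Ordinal.not_bddAbove_compl_of_small s ‹_›)

instance (G : PGame.{u}) : Small.{u} (grundySet G) :=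
  small_range _

theorem grundyValue_eq_sInf_compl_grundySet (G : PGame.{u}) :
    grundyValue G = sInf (grundySet G)ᶜ := by
  cases G
  rw [grundyValue]
  rfl

section Exc

variable (Λ : Set Nimber.{max u v}) [Small.{max u v} Λ]

omit [Small.{max u v} Λ] in
theorem exc_eq_sInf_compl (ρ : Nimber.{v}) :
    exc Λ ρ = sInf (Λ ∪ exc Λ '' Set.Iio ρ)ᶜ := by
  rw [exc]
  congr 1
  ext a
  simp

theorem exc_mem_compl (ρ : Nimber.{v}) : exc Λ ρ ∈ (Λ ∪ exc Λ '' Set.Iio ρ)ᶜ := by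
  have : Small.{max u v} (exc Λ '' Set.Iio ρ) := small_lift _
  rw [exc_eq_sInf_compl]
  exact csInf_mem (Nimber.nonempty_compl_of_small _)

theorem exc_notMem (ρ : Nimber.{v}) : exc Λ ρ ∉ Λ :=
  fun h => exc_mem_compl.{u, v} Λ ρ (Or.inl h)

theorem exc_strictMono : StrictMono (exc Λ : Nimber.{v} → Nimber) := by
  intro μ ρ hμρ
  refine lt_of_le_of_ne ?_ fun h => exc_mem_compl.{u, v} Λ ρ (Or.inr ⟨μ, hμρ, h⟩)
  rw [exc_eq_sInf_compl Λ μ]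
  refine csInf_le' fun h => exc_mem_compl.{u, v} Λ ρ ?_
  exact h.imp id fun ⟨ν, hν, he⟩ => ⟨ν, hν.trans hμρ, he⟩

theorem sInf_compl_union_image_exc (S : Set Nimber.{v}) [Small.{v} S] :
    sInf (Λ ∪ exc Λ '' S)ᶜ = exc Λ (sInf Sᶜ) := by
  set m := sInf Sᶜ
  have hm : m ∉ S := csInf_mem (Nimber.nonempty_compl_of_small S)
  have hIio : Set.Iio m ⊆ S := fun μ hμ => Set.notMem_compl_iff.1 (notMem_of_lt_csInf' hμ)
  have hmem : exc Λ m ∈ (Λ ∪ exc Λ '' S)ᶜ := by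
    rintro (h | ⟨μ, hμ, he⟩)
    · exact exc_notMem.{u, v} Λ m h
    · exact hm ((exc_strictMono.{u, v} Λ).injective he ▸ hμ)
  refine le_antisymm (csInf_le' hmem) ?_
  rw [exc_eq_sInf_compl Λ m]
  exact csInf_le_csInf' ⟨_, hmem⟩
    (Set.compl_subset_compl.2 (Set.union_subset_union_right _ (Set.image_mono hIio)))

end Exc

theorem grundySet_osum (G : PGame.{max u v}) (H : PGame.{v})
    (ih : ∀ j, grundyValue (osum G (H.moveLeft j)) =
      exc (grundySet G) (grundyValue (H.moveLeft j))) :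
    grundySet (osum G H) = grundySet G ∪ exc (grundySet G) '' grundySet H := by
  cases H with
  | mk l r L R =>
  ext a
  constructor
  · rintro ⟨i | j, rfl⟩
    · exact Or.inl ⟨i, rfl⟩
    · exact Or.inr ⟨_, ⟨j, rfl⟩, (ih j).symm⟩
  · rintro (⟨i, rfl⟩ | ⟨_, ⟨j, rfl⟩, rfl⟩)
    · exact ⟨Sum.inl i, rfl⟩
    · exact ⟨Sum.inr j, ih j⟩

theorem grundyValue_osum_general (G H : PGame) :
    grundyValue (osum G H) = exc (grundySet G) (grundyValue H) := by
  induction H with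
  | mk l r L R ih =>
    rw [grundyValue_eq_sInf_compl_grundySet, grundySet_osum G (PGame.mk l r L R) ih,
      sInf_compl_union_image_exc, ← grundyValue_eq_sInf_compl_grundySet]

/-- `Γ₀(G : H) = ex_{Γ₀(H)}(Γ₁(G))` for terminating impartial games. -/
theorem grundyValue_osum (G H : PGame) [G.Impartial] [H.Impartial] :
    grundyValue (osum G H) = exc (grundySet G) (grundyValue H) :=
  grundyValue_osum_general G H
end

section
/- An ordered join S ⋈ G is terminating (admits no infinite sequence of moves) if and only if the support { i ∈ S : G_i ≠ 0 } is a well partially ordered set and each component G_i is terminating. -/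
/-- An impartial combinatorial game, given by a type of positions, a move relation and a
starting position. (This representation allows non-terminating games.) -/
structure RGame where
  Pos : Type
  Move : Pos → Pos → Prop
  start : Pos

/-- A game is terminating (loopfree) if it admits no infinite sequence of moves, i.e. the
starting position is accessible under the converse move relation. -/
def RGame.Terminating (G : RGame) : Prop :=
  Acc (fun q p => G.Move p q) G.start

/-- A poset is well partially ordered if every infinite sequence contains an infinite
ascending subsequence. -/
def IsWPO (S : Type) [PartialOrder S] : Prop :=
  ∀ f : ℕ → S, ∃ g : ℕ → ℕ, StrictMono g ∧ Monotone (f ∘ g)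

/-- The move relation of the ordered join `S ⋈ G`: a position assigns to each `i ∈ S` either a
position of `G i` or `none` (the component having been replaced by the empty game `0`); a move
is made in a single component `i₀`, all components strictly above `i₀` are emptied and all
others are left unchanged. -/
def OJMove {S : Type} [PartialOrder S] (G : S → RGame)
    (x y : ∀ i, Option (G i).Pos) : Prop :=
  ∃ (i₀ : S) (p q : (G i₀).Pos), x i₀ = some p ∧ (G i₀).Move p q ∧ y i₀ = some q ∧
    (∀ i, i₀ < i → y i = none) ∧ ∀ i, i ≠ i₀ → ¬ i₀ < i → y i = x i

/-!
If the join terminates, so does each component (a play of `G i` is a play of the join), and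
the support is well quasi-ordered: along a sequence `f` of support indices with no `f m ≤ f n`
for `m < n`, one can move in `f 0`, `f 1`, … in turn, since a move in `f m` empties only
components strictly above `f m` and hence leaves every later `f n` at its starting position.

Conversely, given an infinite play of the join, extract a subsequence of moves whose components
`i₀` increase. They cannot increase strictly, because a component once emptied stays empty, so
infinitely many moves are made in one component; that component is never emptied in between,
and those moves form an infinite play of it.
-/

open Relation Function

theorem Acc.of_reflTransGen {α : Type*} {r : α → α → Prop} {a b : α}
    (ha : Acc (flip r) a) (hab : ReflTransGen r a b) : Acc (flip r) b := by
  induction hab with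
  | refl => exact ha
  | tail _ hbc ih => exact ih.inv hbc

theorem isWPO_of_wellQuasiOrdered {T : Type} [PartialOrder T]
    (h : WellQuasiOrdered ((· ≤ ·) : T → T → Prop)) : IsWPO T := by
  intro f
  obtain ⟨g, hg⟩ := h.exists_monotone_subseq f
  exact ⟨g, g.strictMono, fun _ _ hmn => hg _ _ hmn⟩

section OrderedJoin

variable {S : Type} [PartialOrder S] {G : S → RGame}

open Classical in
noncomputable def ojUpdate (x : ∀ i, Option (G i).Pos) (i : S) (q : (G i).Pos) :
    ∀ j, Option (G j).Pos :=
  fun j => if i < j then none else update x i (some q) j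

theorem ojUpdate_self (x : ∀ i, Option (G i).Pos) (i : S) (q : (G i).Pos) :
    ojUpdate x i q i = some q := by
  simp [ojUpdate]

theorem ojUpdate_of_not_le (x : ∀ i, Option (G i).Pos) {i j : S} (q : (G i).Pos)
    (hij : ¬ i ≤ j) : ojUpdate x i q j = x j := by
  have hji : j ≠ i := fun h => hij h.ge
  have hlt : ¬ i < j := fun h => hij h.le
  simp [ojUpdate, hji, hlt]

theorem ojMove_ojUpdate {x : ∀ i, Option (G i).Pos} {i : S} {p q : (G i).Pos}
    (hp : x i = some p) (hpq : (G i).Move p q) : OJMove G x (ojUpdate x i q) :=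
  ⟨i, p, q, hp, hpq, ojUpdate_self x i q, fun _ hj => if_pos hj,
    fun j hji hj => by simp [ojUpdate, hj, hji]⟩

theorem OJMove.eq_none_or_eq_or_move {x y : ∀ i, Option (G i).Pos} (h : OJMove G x y) (j : S) :
    y j = none ∨ y j = x j ∨ ∃ p q, x j = some p ∧ (G j).Move p q ∧ y j = some q := by
  obtain ⟨i, p, q, hp, hpq, hq, habove, hrest⟩ := h
  by_cases hji : j = i
  · subst hji
    exact .inr (.inr ⟨p, q, hp, hpq, hq⟩)
  by_cases hij : i < j
  · exact .inl (habove j hij)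
  · exact .inr (.inl (hrest j hji hij))

theorem acc_move_of_acc_ojMove {x : ∀ i, Option (G i).Pos} {i : S} {p : (G i).Pos}
    (hx : Acc (flip (OJMove G)) x) (hp : x i = some p) : Acc (flip (G i).Move) p := by
  induction hx generalizing p with
  | intro x _ ih =>
    exact ⟨p, fun q hpq => ih _ (ojMove_ojUpdate hp hpq) (ojUpdate_self x i q)⟩

theorem exists_lt_le_of_acc_ojMove {x : ∀ i, Option (G i).Pos} (hx : Acc (flip (OJMove G)) x)
    (f : ℕ → S) (hstart : ∀ n, x (f n) = some (G (f n)).start)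
    (hsupp : ∀ n, ∃ q, (G (f n)).Move (G (f n)).start q) : ∃ m n, m < n ∧ f m ≤ f n := by
  induction hx generalizing f with
  | intro x _ ih =>
    by_cases h : ∃ n, 0 < n ∧ f 0 ≤ f n
    · obtain ⟨n, hn, hle⟩ := h
      exact ⟨0, n, hn, hle⟩
    push Not at h
    obtain ⟨q, hq⟩ := hsupp 0
    obtain ⟨m, n, hmn, hle⟩ := ih _ (ojMove_ojUpdate (hstart 0) hq) (f ∘ Nat.succ)
      (fun n => (ojUpdate_of_not_le x q (h _ n.succ_pos)).trans (hstart _)) (fun n => hsupp _)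
    exact ⟨m + 1, n + 1, by omega, hle⟩

section InfinitePlay

variable {x : ℕ → ∀ i, Option (G i).Pos} (hx : ∀ n, OJMove G (x n) (x (n + 1)))
include hx

theorem exists_reflTransGen_of_eq_some {m n : ℕ} {j : S} {r : (G j).Pos} (hmn : m ≤ n)
    (hr : x n j = some r) : ∃ s, x m j = some s ∧ ReflTransGen (G j).Move s r := by
  induction n, hmn using Nat.le_induction generalizing r with
  | base => exact ⟨r, hr, .refl⟩
  | succ n _ ih =>
    rcases (hx n).eq_none_or_eq_or_move j with h | h | ⟨p, q, hp, hpq, hq⟩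
    · simp [h] at hr
    · exact ih (h ▸ hr)
    · obtain ⟨s, hs, hsp⟩ := ih hp
      obtain rfl : q = r := Option.some_injective _ (hq.symm.trans hr)
      exact ⟨s, hs, hsp.tail hpq⟩

theorem not_terminating_of_frequently_moved (hx0 : x 0 = fun i => some (G i).start) (j : S)
    {g : ℕ → ℕ} (hg : StrictMono g)
    (hmoved : ∀ k, ∃ p q, x (g k) j = some p ∧ (G j).Move p q ∧ x (g k + 1) j = some q) :
    ¬ (G j).Terminating := by
  choose c q hc hcq hq using hmoved
  have hstep : ∀ k, TransGen (G j).Move (c k) (c (k + 1)) := by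
    intro k
    obtain ⟨s, hs, hsc⟩ := exists_reflTransGen_of_eq_some hx (hg k.lt_succ_self) (hc (k + 1))
    obtain rfl : q k = s := Option.some_injective _ ((hq k).symm.trans hs)
    exact TransGen.head'_iff.2 ⟨_, hcq k, hsc⟩
  obtain ⟨s, hs, hsc⟩ := exists_reflTransGen_of_eq_some hx (Nat.zero_le (g 0)) (hc 0)
  obtain rfl : (G j).start = s := Option.some_injective _ (congrFun hx0 j ▸ hs)
  intro hterm
  exact not_acc_iff_exists_descending_chain.2 ⟨c, rfl, fun k => transGen_swap.2 (hstep k)⟩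
    (Acc.of_reflTransGen hterm hsc).transGen

end InfinitePlay

theorem acc_ojMove_of_isWPO (hS : IsWPO {i : S // ∃ q, (G i).Move (G i).start q})
    (hG : ∀ i, (G i).Terminating) : Acc (flip (OJMove G)) (fun i => some (G i).start) := by
  by_contra hacc
  obtain ⟨x, hx0, hx⟩ := not_acc_iff_exists_descending_chain.1 hacc
  replace hx : ∀ n, OJMove G (x n) (x (n + 1)) := hx
  choose i p q hp hpq hq habove _ using id hx
  have hsupp : ∀ n, ∃ q, (G (i n)).Move (G (i n)).start q := by
    intro n
    obtain ⟨s, hs, hsp⟩ := exists_reflTransGen_of_eq_some hx (Nat.zero_le n) (hp n)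
    obtain rfl : (G (i n)).start = s := Option.some_injective _ (congrFun hx0 (i n) ▸ hs)
    obtain ⟨c, hc, -⟩ := TransGen.head'_iff.1 (.tail' hsp (hpq n))
    exact ⟨c, hc⟩
  obtain ⟨g, hg, hmono⟩ := hS fun n => ⟨i n, hsupp n⟩
  -- a component emptied at time `g 0 + 1` cannot be moved at the later time `g k`
  have hconst : ∀ k, i (g k) = i (g 0) := by
    intro k
    refine congrArg Subtype.val (((hmono (Nat.zero_le k)).lt_or_eq).resolve_left fun hlt => ?_).symm
    have hk : 0 < k := Nat.pos_of_ne_zero (by rintro rfl; exact lt_irrefl _ hlt)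
    obtain ⟨s, hs, -⟩ := exists_reflTransGen_of_eq_some hx (hg hk) (hp (g k))
    simp [habove (g 0) (i (g k)) hlt] at hs
  exact not_terminating_of_frequently_moved hx hx0 (i (g 0)) hg
    (fun k => hconst k ▸ ⟨p (g k), q (g k), hp (g k), hpq (g k), hq (g k)⟩) (hG _)

end OrderedJoin

/-- the ordered join `S ⋈ G` is terminating iff its support
`{ i ∈ S | G i ≠ 0 }` is a well partially ordered set and each component `G i` is
terminating. -/
theorem ojoin_terminating_iff {S : Type} [PartialOrder S] (G : S → RGame) :
    Acc (fun y x => OJMove G x y) (fun i => some (G i).start) ↔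
      IsWPO {i : S // ∃ q, (G i).Move (G i).start q} ∧ ∀ i, (G i).Terminating := by
  constructor
  · intro h
    refine ⟨isWPO_of_wellQuasiOrdered fun f => ?_, fun i => acc_move_of_acc_ojMove h rfl⟩
    exact exists_lt_le_of_acc_ojMove h (fun n => (f n).1) (fun _ => rfl) (fun n => (f n).2)
  · rintro ⟨hS, hG⟩
    exact acc_ojMove_of_isWPO hS hG
end
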